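/- arXiv:2110.07669 — 3 statements merged into one kernel-verified Lean document; each statement's English description precedes it below -/
import Mathlib

section
/- Let F be a family of holomorphic (or meromorphic) functions on the unit disc D, each extending continuously to the closed disc, and suppose F is not normal at 0, i.e., there exist f_n ∈ F and w_n → 0 with f_n^#(w_n) → ∞, where f^#(z) = |f'(z)|/(1 + |f(z)|²) is the spherical derivative. Define z_n to be a point maximizing z ↦ (1 - |z|) f_n^#(z) on the closed unit disc, and r_n = 1/f_n^#(z_n). Then r_n = o(1 - |z_n|) as n → ∞. -/
open Filter Metric

/-- The spherical derivative `f^#(z) = |f'(z)|/(1+|f(z)|²)`. -/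
noncomputable def sphDeriv (f : ℂ → ℂ) (z : ℂ) : ℝ :=
  ‖deriv f z‖ / (1 + ‖f z‖ ^ 2)

lemma tendsto_one_sub_norm_mul_atTop {ι E : Type*} [SeminormedAddCommGroup E] {l : Filter ι}
    {w : ι → E} (hw : Tendsto w l (nhds 0)) {s : ι → ℝ} (hs : Tendsto s l atTop) :
    Tendsto (fun i => (1 - ‖w i‖) * s i) l atTop := by
  have hweight : Tendsto (fun i => 1 - ‖w i‖) l (nhds 1) := by
    simpa using tendsto_const_nhds.sub hw.norm
  exact hweight.pos_mul_atTop one_pos hs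

theorem zalcman_rescaling_small_general (f : ℕ → ℂ → ℂ)
    (w : ℕ → ℂ) (hw1 : ∀ n, w n ∈ closedBall (0 : ℂ) 1)
    (hw0 : Tendsto w atTop (nhds 0))
    (hwsharp : Tendsto (fun n => sphDeriv (f n) (w n)) atTop atTop)
    (z : ℕ → ℂ)
    (hzmax : ∀ n, ∀ x ∈ closedBall (0 : ℂ) 1,
      (1 - ‖x‖) * sphDeriv (f n) x ≤ (1 - ‖z n‖) * sphDeriv (f n) (z n))
    (r : ℕ → ℝ) (hr : ∀ n, r n = 1 / sphDeriv (f n) (z n)) :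
    Tendsto (fun n => r n / (1 - ‖z n‖)) atTop (nhds 0) := by
  have hmax : Tendsto (fun n => (1 - ‖z n‖) * sphDeriv (f n) (z n)) atTop atTop :=
    tendsto_atTop_mono (fun n => hzmax n (w n) (hw1 n))
      (tendsto_one_sub_norm_mul_atTop hw0 hwsharp)
  have hratio : (fun n => r n / (1 - ‖z n‖)) =
      fun n => ((1 - ‖z n‖) * sphDeriv (f n) (z n))⁻¹ := by
    funext n
    rw [hr n, div_div, one_div, mul_comm]
  rw [hratio]
  exact hmax.inv_tendsto_atTop

/-- Key estimate in the proof of Zalcman's lemma: if `f_n` are holomorphic on a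
neighbourhood of the closed unit disc, `w_n → 0` with `f_n^#(w_n) → ∞`, and `z_n`
maximizes `(1-|z|) f_n^#(z)` on the closed unit disc, `r_n = 1/f_n^#(z_n)`, then
`r_n = o(1 - |z_n|)`. -/
theorem zalcman_rescaling_small (f : ℕ → ℂ → ℂ)
    (hf : ∀ n, DifferentiableOn ℂ (f n) (closedBall (0 : ℂ) 1))
    (w : ℕ → ℂ) (hw1 : ∀ n, w n ∈ closedBall (0 : ℂ) 1)
    (hw0 : Tendsto w atTop (nhds 0))
    (hwsharp : Tendsto (fun n => sphDeriv (f n) (w n)) atTop atTop)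
    (z : ℕ → ℂ) (hz1 : ∀ n, z n ∈ closedBall (0 : ℂ) 1)
    (hzmax : ∀ n, ∀ x ∈ closedBall (0 : ℂ) 1,
      (1 - ‖x‖) * sphDeriv (f n) x ≤ (1 - ‖z n‖) * sphDeriv (f n) (z n))
    (r : ℕ → ℝ) (hr : ∀ n, r n = 1 / sphDeriv (f n) (z n)) :
    Tendsto (fun n => r n / (1 - ‖z n‖)) atTop (nhds 0) :=
  zalcman_rescaling_small_general f w hw1 hw0 hwsharp z hzmax r hr
end

section
/- A spherical geodesic triangle whose circumscribed radius is at most arccos(1/3) has area at most π. -/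
/-!
Let `O` be the centre of a disc of radius `arccos (1/3)` containing the triangle. Then
`⟪O, A⟫, ⟪O, B⟫, ⟪O, C⟫ ≥ 1/3`, so `‖A + B + C‖ ≥ ⟪O, A + B + C⟫ ≥ 1`, which says
`1 + p + q + r ≥ 0` for `p = ⟪A, B⟫`, `q = ⟪A, C⟫`, `r = ⟪B, C⟫`.  The area is at most `π`
exactly when the angles satisfy `α + β + γ ≤ 2π`.  By the spherical law of cosines,
`(cos γ - cos (α + β)) · (1 - p²) √(1 - q²) √(1 - r²) = (1 - p)(1 + p + q + r)(1 + p - q - r)`,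
and when `α + β > π` the last factor is nonnegative (otherwise `cos α` and `cos β` would both be
positive), so `cos (α + β) ≤ cos γ`, i.e. `γ ≤ 2π - (α + β)`.
-/

open scoped RealInnerProductSpace

noncomputable section

/-- The geodesic (angular) distance between two points of the unit sphere in `ℝ³`. -/
def sphDist (x y : EuclideanSpace ℝ (Fin 3)) : ℝ := Real.arccos ⟪x, y⟫

/-- The spherical angle at the vertex `A` of the spherical triangle `ABC`: the angle
between the tangent directions at `A` towards `B` and towards `C`. -/
def sphAngle (A B C : EuclideanSpace ℝ (Fin 3)) : ℝ :=
  InnerProductGeometry.angle (B - ⟪A, B⟫ • A) (C - ⟪A, C⟫ • A)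

/-- The area of a spherical geodesic triangle, by Girard's formula (Gauss–Bonnet):
the angle sum minus `π`. -/
def sphTriangleArea (A B C : EuclideanSpace ℝ (Fin 3)) : ℝ :=
  sphAngle A B C + sphAngle B A C + sphAngle C A B - Real.pi

open Real Set InnerProductGeometry

namespace Real

theorem add_add_le_two_pi_of_cos_add_le_cos {α β γ : ℝ} (hγ : γ ∈ Icc 0 π)
    (hαβ : α + β ∈ Icc π (2 * π)) (h : cos (α + β) ≤ cos γ) : α + β + γ ≤ 2 * π := by
  have hmem : 2 * π - (α + β) ∈ Icc 0 π := ⟨by linarith [hαβ.2], by linarith [hαβ.1]⟩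
  have : γ ≤ 2 * π - (α + β) :=
    (strictAntiOn_cos.le_iff_ge hmem hγ).1 (by rwa [cos_two_pi_sub])
  linarith

theorem cos_add_cos_neg_of_pi_lt_add {α β : ℝ} (hα : α ≤ π) (hβ : β ≤ π) (h : π < α + β) :
    cos α + cos β < 0 := by
  have : cos β < cos (π - α) :=
    strictAntiOn_cos ⟨by linarith, by linarith⟩ ⟨by linarith, hβ⟩ (by linarith)
  rw [cos_pi_sub] at this
  linarith

section LawOfCosines

variable {p q r u v w α β γ : ℝ}

theorem sin_mul_eq_sin_mul_of_cos_mul_eq (hu : 0 ≤ u) (hv : 0 ≤ v) (hw : 0 ≤ w)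
    (hu2 : u ^ 2 = 1 - p ^ 2) (hv2 : v ^ 2 = 1 - q ^ 2) (hw2 : w ^ 2 = 1 - r ^ 2)
    (hα : α ∈ Icc 0 π) (hβ : β ∈ Icc 0 π)
    (hcα : cos α * (u * v) = r - p * q) (hcβ : cos β * (u * w) = q - p * r) :
    sin α * (u * v) = sin β * (u * w) := by
  have hsα := sin_nonneg_of_nonneg_of_le_pi hα.1 hα.2
  have hsβ := sin_nonneg_of_nonneg_of_le_pi hβ.1 hβ.2
  refine (sq_eq_sq₀ (by positivity) (by positivity)).1 ?_
  linear_combination (u ^ 2 * v ^ 2) * sin_sq_add_cos_sq α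
    - (u ^ 2 * w ^ 2) * sin_sq_add_cos_sq β
    - (cos α * (u * v) + r - p * q) * hcα + (cos β * (u * w) + q - p * r) * hcβ
    + (v ^ 2 - w ^ 2) * hu2 + (1 - p ^ 2) * hv2 - (1 - p ^ 2) * hw2

theorem cos_sub_cos_add_mul_eq (hu2 : u ^ 2 = 1 - p ^ 2) (hv2 : v ^ 2 = 1 - q ^ 2)
    (hcα : cos α * (u * v) = r - p * q) (hcβ : cos β * (u * w) = q - p * r)
    (hcγ : cos γ * (v * w) = p - q * r) (hs : sin α * (u * v) = sin β * (u * w)) :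
    (cos γ - cos (α + β)) * (u ^ 2 * (v * w)) =
      (1 - p) * (1 + p + q + r) * (1 + p - q - r) := by
  rw [cos_add]
  linear_combination u ^ 2 * hcγ - (cos β * (u * w) + cos α * (u * v) + r - p * q) * hcα
    - (r - p * q) * hcβ + u ^ 2 * v ^ 2 * sin_sq_add_cos_sq α - sin α * (u * v) * hs
    + (p - q * r + v ^ 2) * hu2 + (1 - p ^ 2) * hv2

theorem add_add_le_two_pi_of_cos_mul_eq (hu : 0 < u) (hv : 0 < v) (hw : 0 < w)
    (hu2 : u ^ 2 = 1 - p ^ 2) (hv2 : v ^ 2 = 1 - q ^ 2) (hw2 : w ^ 2 = 1 - r ^ 2)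
    (hα : α ∈ Icc 0 π) (hβ : β ∈ Icc 0 π) (hγ : γ ∈ Icc 0 π)
    (hcα : cos α * (u * v) = r - p * q) (hcβ : cos β * (u * w) = q - p * r)
    (hcγ : cos γ * (v * w) = p - q * r) (hD : 0 ≤ 1 + p + q + r) :
    α + β + γ ≤ 2 * π := by
  rcases le_or_gt (α + β) π with hαβ | hαβ
  · linarith [hγ.2]
  obtain ⟨hp₁, hp₂⟩ := abs_lt.1 ((sq_lt_one_iff_abs_lt_one p).1 (by nlinarith))
  obtain ⟨hq₁, hq₂⟩ := abs_lt.1 ((sq_lt_one_iff_abs_lt_one q).1 (by nlinarith))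
  obtain ⟨hr₁, hr₂⟩ := abs_lt.1 ((sq_lt_one_iff_abs_lt_one r).1 (by nlinarith))
  have hcross : 0 ≤ 1 + p - q - r := by
    by_contra! hneg
    -- `r - p q = (1 + p)(1 - q) + (q + r - 1 - p)`, and symmetrically for `q - p r`
    have hr_pq : 0 < r - p * q := by
      nlinarith [mul_pos (by linarith : 0 < 1 + p) (by linarith : 0 < 1 - q)]
    have hq_pr : 0 < q - p * r := by
      nlinarith [mul_pos (by linarith : 0 < 1 + p) (by linarith : 0 < 1 - r)]
    have hcα_pos : 0 < cos α := pos_of_mul_pos_left (hcα ▸ hr_pq) (by positivity)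
    have hcβ_pos : 0 < cos β := pos_of_mul_pos_left (hcβ ▸ hq_pr) (by positivity)
    linarith [cos_add_cos_neg_of_pi_lt_add hα.2 hβ.2 hαβ]
  refine add_add_le_two_pi_of_cos_add_le_cos hγ ⟨hαβ.le, by linarith [hα.2, hβ.2]⟩ ?_
  have hs := sin_mul_eq_sin_mul_of_cos_mul_eq hu.le hv.le hw.le hu2 hv2 hw2 hα hβ hcα hcβ
  have hprod : 0 ≤ (cos γ - cos (α + β)) * (u ^ 2 * (v * w)) := by
    rw [cos_sub_cos_add_mul_eq hu2 hv2 hcα hcβ hcγ hs]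
    exact mul_nonneg (mul_nonneg (by linarith) hD) hcross
  linarith [nonneg_of_mul_nonneg_left hprod (by positivity)]

end LawOfCosines

end Real

section UnitVectors

variable {V : Type*} [NormedAddCommGroup V] [InnerProductSpace ℝ V] {a b c : V}

theorem inner_sub_inner_smul_sub_inner_smul (ha : ‖a‖ = 1) :
    ⟪b - ⟪a, b⟫ • a, c - ⟪a, c⟫ • a⟫ = ⟪b, c⟫ - ⟪a, b⟫ * ⟪a, c⟫ := by
  simp only [inner_sub_left, inner_sub_right, real_inner_smul_left, real_inner_smul_right,
    inner_self_eq_one_of_norm_eq_one ha, real_inner_comm a b]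
  ring

theorem norm_sub_inner_smul (ha : ‖a‖ = 1) (hb : ‖b‖ = 1) :
    ‖b - ⟪a, b⟫ • a‖ = √(1 - ⟪a, b⟫ ^ 2) := by
  rw [norm_eq_sqrt_real_inner, inner_sub_inner_smul_sub_inner_smul ha,
    inner_self_eq_one_of_norm_eq_one hb, sq]

theorem sq_real_inner_le_one (ha : ‖a‖ = 1) (hb : ‖b‖ = 1) : ⟪a, b⟫ ^ 2 ≤ 1 := by
  obtain ⟨h₁, h₂⟩ := real_inner_mem_Icc_of_norm_eq_one ha hb
  nlinarith

theorem one_add_inner_add_inner_add_inner_nonneg {o : V} (ho : ‖o‖ = 1) (ha : ‖a‖ = 1)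
    (hb : ‖b‖ = 1) (hc : ‖c‖ = 1) (h : 1 ≤ ⟪o, a⟫ + ⟪o, b⟫ + ⟪o, c⟫) :
    0 ≤ 1 + ⟪a, b⟫ + ⟪a, c⟫ + ⟪b, c⟫ := by
  have hle : 1 ≤ ‖a + b + c‖ :=
    calc 1 ≤ ⟪o, a + b + c⟫ := by rwa [inner_add_right, inner_add_right]
      _ ≤ ‖a + b + c‖ := by simpa [ho] using real_inner_le_norm o (a + b + c)
  have hsq : ‖a + b + c‖ ^ 2 = 3 + 2 * (⟪a, b⟫ + ⟪a, c⟫ + ⟪b, c⟫) := by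
    rw [norm_add_sq_real, norm_add_sq_real, inner_add_left, ha, hb, hc]
    ring
  nlinarith

end UnitVectors

variable {A B C : EuclideanSpace ℝ (Fin 3)}

theorem cos_sphAngle_mul (hA : ‖A‖ = 1) (hB : ‖B‖ = 1) (hC : ‖C‖ = 1) :
    cos (sphAngle A B C) * (√(1 - ⟪A, B⟫ ^ 2) * √(1 - ⟪A, C⟫ ^ 2)) =
      ⟪B, C⟫ - ⟪A, B⟫ * ⟪A, C⟫ := by
  rw [← norm_sub_inner_smul hA hB, ← norm_sub_inner_smul hA hC, sphAngle,
    cos_angle_mul_norm_mul_norm, inner_sub_inner_smul_sub_inner_smul hA]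

theorem sphAngle_eq_pi_div_two_of_sq_inner_eq_one (hA : ‖A‖ = 1) (hB : ‖B‖ = 1)
    (h : ⟪A, B⟫ ^ 2 = 1) (X : EuclideanSpace ℝ (Fin 3)) :
    sphAngle A B X = π / 2 := by
  have : B - ⟪A, B⟫ • A = 0 := by
    rw [← norm_eq_zero, norm_sub_inner_smul hA hB, h, sub_self, sqrt_zero]
  rw [sphAngle, this, angle_zero_left]

theorem sphTriangleArea_swap (A B C : EuclideanSpace ℝ (Fin 3)) :
    sphTriangleArea A C B = sphTriangleArea A B C := by
  simp only [sphTriangleArea, sphAngle, angle_comm (C - _)]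
  ring

theorem sphTriangleArea_rotate (A B C : EuclideanSpace ℝ (Fin 3)) :
    sphTriangleArea B C A = sphTriangleArea A B C := by
  simp only [sphTriangleArea, sphAngle, angle_comm (C - _), angle_comm (A - ⟪C, A⟫ • C)]
  ring

theorem sphTriangleArea_le_pi_of_sq_inner_eq_one (hA : ‖A‖ = 1) (hB : ‖B‖ = 1)
    (h : ⟪A, B⟫ ^ 2 = 1) : sphTriangleArea A B C ≤ π := by
  have hBA : ⟪B, A⟫ ^ 2 = 1 := by rwa [real_inner_comm]
  rw [sphTriangleArea, sphAngle_eq_pi_div_two_of_sq_inner_eq_one hA hB h,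
    sphAngle_eq_pi_div_two_of_sq_inner_eq_one hB hA hBA]
  have : sphAngle C A B ≤ π := angle_le_pi _ _
  linarith

theorem sphTriangleArea_le_pi_of_sq_inner_lt_one (hA : ‖A‖ = 1) (hB : ‖B‖ = 1) (hC : ‖C‖ = 1)
    (hp : ⟪A, B⟫ ^ 2 < 1) (hq : ⟪A, C⟫ ^ 2 < 1) (hr : ⟪B, C⟫ ^ 2 < 1)
    (hD : 0 ≤ 1 + ⟪A, B⟫ + ⟪A, C⟫ + ⟪B, C⟫) : sphTriangleArea A B C ≤ π := by
  have hcβ := cos_sphAngle_mul hB hA hC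
  have hcγ := cos_sphAngle_mul hC hA hB
  rw [real_inner_comm A B] at hcβ
  rw [real_inner_comm A C, real_inner_comm B C] at hcγ
  have hmem (X Y Z : EuclideanSpace ℝ (Fin 3)) : sphAngle X Y Z ∈ Icc 0 π :=
    ⟨angle_nonneg _ _, angle_le_pi _ _⟩
  have := add_add_le_two_pi_of_cos_mul_eq (sqrt_pos.2 (sub_pos.2 hp))
    (sqrt_pos.2 (sub_pos.2 hq)) (sqrt_pos.2 (sub_pos.2 hr)) (sq_sqrt (sub_pos.2 hp).le)
    (sq_sqrt (sub_pos.2 hq).le) (sq_sqrt (sub_pos.2 hr).le) (hmem A B C) (hmem B A C)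
    (hmem C A B) (cos_sphAngle_mul hA hB hC) hcβ hcγ (by linarith)
  rw [sphTriangleArea]
  linarith

theorem sphTriangleArea_le_pi (hA : ‖A‖ = 1) (hB : ‖B‖ = 1) (hC : ‖C‖ = 1)
    (hD : 0 ≤ 1 + ⟪A, B⟫ + ⟪A, C⟫ + ⟪B, C⟫) : sphTriangleArea A B C ≤ π := by
  obtain hp | hp := (sq_real_inner_le_one hA hB).eq_or_lt
  · exact sphTriangleArea_le_pi_of_sq_inner_eq_one hA hB hp
  obtain hq | hq := (sq_real_inner_le_one hA hC).eq_or_lt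
  · rw [← sphTriangleArea_swap]
    exact sphTriangleArea_le_pi_of_sq_inner_eq_one hA hC hq
  obtain hr | hr := (sq_real_inner_le_one hB hC).eq_or_lt
  · rw [← sphTriangleArea_rotate]
    exact sphTriangleArea_le_pi_of_sq_inner_eq_one hB hC hr
  exact sphTriangleArea_le_pi_of_sq_inner_lt_one hA hB hC hp hq hr hD

theorem le_inner_of_sphDist_le_arccos {O X : EuclideanSpace ℝ (Fin 3)} (hO : ‖O‖ = 1)
    (hX : ‖X‖ = 1) {c : ℝ} (hc : c ∈ Icc (-1) 1) (h : sphDist O X ≤ arccos c) :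
    c ≤ ⟪O, X⟫ :=
  (strictAntiOn_arccos.le_iff_ge (real_inner_mem_Icc_of_norm_eq_one hO hX) hc).1 h

/-- A spherical geodesic triangle on the unit sphere whose circumscribed radius is at
most `arccos(1/3)` has area at most `π`. -/
theorem area_le_pi_of_circumradius_le_arccos_third
    (A B C : EuclideanSpace ℝ (Fin 3))
    (hA : ‖A‖ = 1) (hB : ‖B‖ = 1) (hC : ‖C‖ = 1)
    (hcirc : ∃ O : EuclideanSpace ℝ (Fin 3), ‖O‖ = 1 ∧
      sphDist O A ≤ Real.arccos (1/3) ∧ sphDist O B ≤ Real.arccos (1/3) ∧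
      sphDist O C ≤ Real.arccos (1/3)) :
    sphTriangleArea A B C ≤ Real.pi := by
  obtain ⟨O, hO, hOA, hOB, hOC⟩ := hcirc
  have hc : (1 / 3 : ℝ) ∈ Icc (-1) 1 := by norm_num
  refine sphTriangleArea_le_pi hA hB hC (one_add_inner_add_inner_add_inner_nonneg hO hA hB hC ?_)
  linarith [le_inner_of_sphDist_le_arccos hO hA hc hOA, le_inner_of_sphDist_le_arccos hO hB hc hOB,
    le_inner_of_sphDist_le_arccos hO hC hc hOC]

end
end

section
/- Let f be a nonconstant entire function with bounded spherical derivative: f^#(z) = |f'(z)|/(1+|f(z)|²) ≤ C for all z ∈ ℂ. Then f has order at most 1, normal type; precisely, log max_{|z|≤r} log(1 + |f(z)|) ≤ log r + O(1), i.e., log|f(z)| ≤ C'·|z| + O(1) for some constant C' depending on C. -/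
/-!
Where `‖f‖ > 1`, `log ‖f‖` is a positive harmonic function, so Harnack's inequality holds
on every disc missing `{‖f‖ ≤ 1}`. The bound `f^# ≤ C` prevents `‖f‖` from climbing from
`1` to `2` over distances shorter than `1 / (10 C)`; together with Harnack's inequality on
the largest such disc around `p`, this shows that the disc of radius `log ‖f p‖ / (20 C)`
about `p` misses `{‖f‖ ≤ 1}` once `log ‖f p‖ > 4`. Harnack's inequality on that disc then
says that `log ‖f‖` drops by at most `40 C` per unit step towards the origin, whence
`log ‖f z‖ ≤ 40 C ‖z‖ + O(1)`.
-/

open Metric Set Real ComplexConjugate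

namespace Complex

theorem norm_sub_sq_add_four_mul_re_mul_re (w a : ℂ) :
    ‖w - a‖ ^ 2 + 4 * w.re * a.re = ‖w + conj a‖ ^ 2 := by
  simp only [Complex.sq_norm, normSq_apply, sub_re, sub_im, add_re, add_im, conj_re, conj_im]
  ring

theorem norm_sub_lt_norm_add_conj {w a : ℂ} (hw : 0 < w.re) (ha : 0 < a.re) :
    ‖w - a‖ < ‖w + conj a‖ := by
  refine lt_of_pow_lt_pow_left₀ 2 (norm_nonneg _) ?_
  rw [← norm_sub_sq_add_four_mul_re_mul_re]
  nlinarith [mul_pos hw ha]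

theorem re_mul_one_sub_le_of_norm_sub_le {w a : ℂ} {k : ℝ} (hw : 0 < w.re) (ha : 0 < a.re)
    (hk : 0 ≤ k) (h : ‖w - a‖ ≤ k * ‖w + conj a‖) : a.re * (1 - k) ≤ w.re * (1 + k) := by
  have hsq : ‖w - a‖ ^ 2 ≤ k ^ 2 * ‖w + conj a‖ ^ 2 := by
    rw [← mul_pow]; exact pow_le_pow_left₀ (norm_nonneg _) h 2
  simp only [Complex.sq_norm, normSq_apply, sub_re, sub_im, add_re, add_im, conj_re,
    conj_im] at hsq
  by_contra! hlt
  have hk1 : k < 1 := by nlinarith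
  have h2 : (k * (w.re + a.re)) ^ 2 < (a.re - w.re) ^ 2 :=
    pow_lt_pow_left₀ (by linarith) (by positivity) two_ne_zero
  nlinarith [mul_nonneg (mul_self_nonneg (w.im - a.im))
    (sub_nonneg.2 (pow_le_one₀ (n := 2) hk hk1.le))]

end Complex

/-- Harnack's inequality for the real part, via the Schwarz lemma for the Cayley transform. -/
theorem re_mul_sub_dist_le_of_differentiableOn_ball {F : ℂ → ℂ} {c z : ℂ} {R : ℝ}
    (hF : DifferentiableOn ℂ F (ball c R)) (hpos : ∀ w ∈ ball c R, 0 < (F w).re)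
    (hz : z ∈ ball c R) : (F c).re * (R - dist z c) ≤ (F z).re * (R + dist z c) := by
  have hR : 0 < R := pos_of_mem_ball hz
  have hc : c ∈ ball c R := mem_ball_self hR
  have hden : ∀ w ∈ ball c R, F w + conj (F c) ≠ 0 := fun w hw h0 => by
    have := congrArg Complex.re h0
    simp only [Complex.add_re, Complex.conj_re, Complex.zero_re] at this
    linarith [hpos w hw, hpos c hc]
  set φ : ℂ → ℂ := fun w => (F w - F c) / (F w + conj (F c))
  have hφ : MapsTo φ (ball c R) (closedBall (φ c) 1) := fun w hw => by
    simp only [φ, sub_self, zero_div, mem_closedBall, dist_zero_right, norm_div]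
    exact div_le_one_of_le₀ (Complex.norm_sub_lt_norm_add_conj (hpos w hw) (hpos c hc)).le
      (norm_nonneg _)
  have hschwarz := Complex.dist_le_div_mul_dist_of_mapsTo_ball (f := φ)
    ((hF.sub_const _).div (hF.add_const _) hden) hφ hz
  simp only [φ, sub_self, zero_div, dist_zero_right, norm_div] at hschwarz
  rw [div_le_iff₀ (norm_pos_iff.2 (hden z hz)), one_div_mul_eq_div] at hschwarz
  have key := Complex.re_mul_one_sub_le_of_norm_sub_le (hpos z hz) (hpos c hc)
    (div_nonneg dist_nonneg hR.le) hschwarz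
  have e1 : R - dist z c = R * (1 - dist z c / R) := by field_simp
  have e2 : R + dist z c = R * (1 + dist z c / R) := by field_simp
  rw [e1, e2, mul_left_comm, mul_left_comm (F z).re]
  exact mul_le_mul_of_nonneg_left key hR.le

theorem mul_sub_dist_le_of_harmonicOnNhd_ball {u : ℂ → ℝ} {c z : ℂ} {R : ℝ}
    (hu : InnerProductSpace.HarmonicOnNhd u (ball c R)) (hpos : ∀ w ∈ ball c R, 0 < u w)
    (hz : z ∈ ball c R) :
    u c * (R - dist z c) ≤ u z * (R + dist z c) := by
  obtain ⟨F, hF, hre⟩ := hu.exists_analyticOnNhd_ball_re_eq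
  have hc : c ∈ ball c R := mem_ball_self (pos_of_mem_ball hz)
  rw [← hre hc, ← hre hz]
  exact re_mul_sub_dist_le_of_differentiableOn_ball hF.differentiableOn
    (fun w hw => by simpa [hre hw] using hpos w hw) hz

theorem log_norm_mul_sub_dist_le_of_differentiableOn_ball {f : ℂ → ℂ} {c z : ℂ} {R : ℝ}
    (hf : DifferentiableOn ℂ f (ball c R)) (h1 : ∀ w ∈ ball c R, 1 < ‖f w‖)
    (hz : z ∈ ball c R) :
    log ‖f c‖ * (R - dist z c) ≤ log ‖f z‖ * (R + dist z c) := by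
  refine mul_sub_dist_le_of_harmonicOnNhd_ball (fun w hw => ?_)
    (fun w hw => log_pos (h1 w hw)) hz
  exact (hf.analyticAt (isOpen_ball.mem_nhds hw)).harmonicAt_log_norm
    (norm_pos_iff.1 (one_pos.trans (h1 w hw)))

theorem le_mul_norm_add_of_le_add_mul_dist {E : Type*} [NormedAddCommGroup E] [NormedSpace ℝ E]
    {u : E → ℝ} {K L : ℝ} (hL : 0 ≤ L) (h0 : u 0 ≤ K)
    (hstep : ∀ p q, K < u p → dist q p ≤ 1 → u p ≤ u q + L * dist q p) (p : E) :
    u p ≤ L * ‖p‖ + (K + L) := by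
  have hnat : ∀ n : ℕ, ∀ p : E, ‖p‖ ≤ n → u p ≤ K + L * n := by
    intro n
    induction n with
    | zero =>
      intro p hp
      simpa [norm_le_zero_iff.1 (by simpa using hp)] using h0
    | succ n ih =>
      intro p hp
      by_cases hK : u p ≤ K
      · push_cast; nlinarith [n.cast_nonneg (α := ℝ)]
      set q := ((n : ℝ) / (n + 1)) • p
      have hq : ‖q‖ ≤ n := by
        rw [norm_smul, Real.norm_of_nonneg (by positivity), div_mul_eq_mul_div,
          div_le_iff₀ (by positivity)]
        push_cast at hp
        nlinarith [n.cast_nonneg (α := ℝ)]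
      have hqp : dist q p ≤ 1 := by
        have hcoef : (n : ℝ) / (n + 1) - 1 = -(1 / (n + 1)) := by field_simp; ring
        rw [dist_eq_norm, show q - p = ((n : ℝ) / (n + 1) - 1) • p by rw [sub_smul, one_smul],
          hcoef, norm_smul, norm_neg, Real.norm_of_nonneg (by positivity), one_div_mul_eq_div,
          div_le_one (by positivity)]
        push_cast at hp
        exact hp
      push_cast
      linarith [hstep p q (not_le.1 hK) hqp, ih q hq, mul_le_mul_of_nonneg_left hqp hL]
  calc u p ≤ K + L * ⌈‖p‖⌉₊ := hnat _ p (Nat.le_ceil _)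
    _ ≤ L * ‖p‖ + (K + L) := by
      nlinarith [Nat.ceil_lt_add_one (norm_nonneg p)]

noncomputable def sphericalDeriv (f : ℂ → ℂ) (z : ℂ) : ℝ := ‖deriv f z‖ / (1 + ‖f z‖ ^ 2)

theorem sphericalDeriv_nonneg (f : ℂ → ℂ) (z : ℂ) : 0 ≤ sphericalDeriv f z := by
  unfold sphericalDeriv; positivity

section SphericalDeriv

variable {f : ℂ → ℂ} {C : ℝ}

theorem norm_deriv_le_of_sphericalDeriv_le {z : ℂ} (h : sphericalDeriv f z ≤ C) :
    ‖deriv f z‖ ≤ C * (1 + ‖f z‖ ^ 2) :=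
  (div_le_iff₀ (by positivity)).1 h

theorem norm_le_add_one_of_sphericalDeriv_le (hf : Differentiable ℂ f)
    (hC : ∀ z, sphericalDeriv f z ≤ C) {q w : ℂ} {a : ℝ} (hq : ‖f q‖ ≤ a)
    (hw : C * (1 + (a + 1) ^ 2) * ‖w - q‖ < 1) : ‖f w‖ ≤ a + 1 := by
  have hC0 : 0 ≤ C := (sphericalDeriv_nonneg f q).trans (hC q)
  have hg : ∀ t : ℝ, HasDerivAt (fun t => f (AffineMap.lineMap q w t))
      ((w - q) • deriv f (AffineMap.lineMap q w t)) t := fun t =>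
    (hf _).hasDerivAt.scomp t AffineMap.hasDerivAt_lineMap
  -- compare `‖f‖` along the segment with the barrier `a + t`, whose slope `1` is never reached
  have key := image_norm_le_of_norm_deriv_right_lt_deriv_boundary (a := 0) (b := 1)
    (B := fun t => a + t) (B' := fun _ => 1)
    (fun t _ => (hg t).continuousAt.continuousWithinAt) (fun t _ => (hg t).hasDerivWithinAt)
    (by simpa using hq) (fun t => (hasDerivAt_id t).const_add a) ?_
    (right_mem_Icc.2 zero_le_one)
  · simpa using key
  intro t ht heq
  have hft : ‖f (AffineMap.lineMap q w t)‖ ≤ a + 1 := by rw [heq]; linarith [ht.2]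
  calc ‖(w - q) • deriv f (AffineMap.lineMap q w t)‖
      ≤ ‖w - q‖ * (C * (1 + (a + 1) ^ 2)) := by
        rw [norm_smul]
        gcongr
        refine (norm_deriv_le_of_sphericalDeriv_le (hC _)).trans ?_
        gcongr
    _ < 1 := by linarith

theorem log_norm_mul_min_le_of_one_lt_norm_on_ball (hf : Differentiable ℂ f)
    (hC : ∀ z, sphericalDeriv f z ≤ C) (hCpos : 0 < C) {p q : ℂ} {d : ℝ} (hd : 0 < d)
    (hball : ∀ w ∈ ball p d, 1 < ‖f w‖) (hq : dist q p = d) (hfq : ‖f q‖ ≤ 1) :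
    log ‖f p‖ * min (1 / (10 * C)) (d / 2) ≤ 2 * d := by
  set r := min (1 / (10 * C)) (d / 2)
  have hr0 : 0 < r := lt_min (by positivity) (by positivity)
  have hrd : r ≤ d / 2 := min_le_right _ _
  set q₁ := AffineMap.lineMap q p (r / d)
  have hq₁q : dist q₁ q = r := by
    rw [dist_lineMap_left, hq, Real.norm_of_nonneg (by positivity),
      div_mul_cancel₀ _ hd.ne']
  have hq₁p : dist q₁ p = d - r := by
    rw [dist_lineMap_right, hq, Real.norm_of_nonneg, sub_mul,
      div_mul_cancel₀ _ hd.ne', one_mul]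
    rw [sub_nonneg, div_le_one hd]; linarith
  have hq₁ball : q₁ ∈ ball p d := by rw [mem_ball, hq₁p]; linarith
  have hfq₁ : ‖f q₁‖ ≤ 2 := by
    have h := norm_le_add_one_of_sphericalDeriv_le hf hC hfq (w := q₁) ?_
    · linarith
    rw [← dist_eq_norm, hq₁q]
    calc C * (1 + (1 + 1) ^ 2) * r ≤ C * (1 + (1 + 1) ^ 2) * (1 / (10 * C)) := by
          gcongr; exact min_le_left _ _
      _ < 1 := by field_simp; norm_num
  have hβ0 : 0 ≤ log ‖f q₁‖ := (log_pos (hball q₁ hq₁ball)).le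
  have hβ1 : log ‖f q₁‖ ≤ 1 := by
    calc log ‖f q₁‖ ≤ log 2 :=
          log_le_log (one_pos.trans (hball q₁ hq₁ball)) hfq₁
      _ ≤ 1 := by linarith [log_two_lt_d9]
  have harnack := log_norm_mul_sub_dist_le_of_differentiableOn_ball hf.differentiableOn
    hball hq₁ball
  rw [hq₁p] at harnack
  nlinarith

theorem one_lt_norm_of_dist_lt (hf : Differentiable ℂ f) (hC : ∀ z, sphericalDeriv f z ≤ C)
    (hCpos : 0 < C) {p w : ℂ} (hp : 4 < log ‖f p‖)
    (hw : dist w p < log ‖f p‖ / (20 * C)) : 1 < ‖f w‖ := by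
  by_contra! hfw
  set S := {z : ℂ | ‖f z‖ ≤ 1}
  obtain ⟨q, hqS, hq⟩ :=
    (isClosed_le hf.continuous.norm continuous_const).exists_infDist_eq_dist ⟨w, hfw⟩ p
  have hpq : p ≠ q := by
    rintro rfl
    linarith [log_nonpos (norm_nonneg _) hqS]
  have hball : ∀ u ∈ ball p (dist q p), 1 < ‖f u‖ := fun u hu => by
    by_contra! hfu
    have h := infDist_le_dist_of_mem (x := p) (show u ∈ S from hfu)
    rw [hq, dist_comm p q] at h
    rw [mem_ball, dist_comm] at hu
    linarith
  have hqw : dist q p ≤ dist w p := by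
    rw [dist_comm q, dist_comm w, ← hq]; exact infDist_le_dist_of_mem hfw
  have key := log_norm_mul_min_le_of_one_lt_norm_on_ball hf hC hCpos
    (dist_pos.2 hpq.symm) hball rfl hqS
  rcases min_choice (1 / (10 * C)) (dist q p / 2) with hmin | hmin <;> rw [hmin] at key
  · rw [lt_div_iff₀ (by positivity)] at hw
    have : log ‖f p‖ ≤ 20 * C * dist q p := by
      field_simp at key; linarith
    nlinarith
  · nlinarith [dist_pos.2 hpq.symm]

theorem log_norm_le_add_mul_dist (hf : Differentiable ℂ f) (hC : ∀ z, sphericalDeriv f z ≤ C)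
    (hCpos : 0 < C) {p q : ℂ} (hp : 4 < log ‖f p‖)
    (hq : dist q p < log ‖f p‖ / (20 * C)) :
    log ‖f p‖ ≤ log ‖f q‖ + 40 * C * dist q p := by
  set R := log ‖f p‖ / (20 * C)
  have hball : ∀ w ∈ ball p R, 1 < ‖f w‖ := fun w hw =>
    one_lt_norm_of_dist_lt hf hC hCpos hp hw
  have harnack := log_norm_mul_sub_dist_le_of_differentiableOn_ball hf.differentiableOn hball hq
  have hR : log ‖f p‖ = 20 * C * R := by simp only [R]; field_simp
  have hβ : 0 ≤ log ‖f q‖ := (log_pos (hball q hq)).le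
  -- with `α = log ‖f p‖ = 20 C R` and `β = log ‖f q‖`, Harnack reads
  -- `(α - β) R ≤ (α + β) dist q p`, and `α + β < 2 α` when `β < α`
  rcases le_or_gt (log ‖f p‖) (log ‖f q‖) with hle | hlt
  · nlinarith [dist_nonneg (x := q) (y := p)]
  · have hpos : 0 < R := dist_nonneg.trans_lt hq
    nlinarith [dist_nonneg (x := q) (y := p)]

theorem exists_posLog_norm_le_mul_norm_add (hf : Differentiable ℂ f)
    (hC : ∀ z, sphericalDeriv f z ≤ C) (hCpos : 0 < C) :
    ∃ K, ∀ z, log⁺ ‖f z‖ ≤ 40 * C * ‖z‖ + K := by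
  set K := max (max 4 (20 * C)) (log⁺ ‖f 0‖)
  have h4K : 4 ≤ K := le_max_of_le_left (le_max_left _ _)
  have hCK : 20 * C ≤ K := le_max_of_le_left (le_max_right _ _)
  refine ⟨K + 40 * C, le_mul_norm_add_of_le_add_mul_dist (by positivity) (le_max_right _ _) ?_⟩
  intro p q hp hqp
  have hpK : K < log ‖f p‖ := (lt_max_iff.1 hp).resolve_left (by linarith)
  have hq : dist q p < log ‖f p‖ / (20 * C) := by
    rw [lt_div_iff₀ (by positivity)]
    nlinarith
  have hstep := log_norm_le_add_mul_dist hf hC hCpos (by linarith) hq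
  refine max_le (add_nonneg posLog_nonneg (by positivity)) ?_
  have hq_posLog : log ‖f q‖ ≤ log⁺ ‖f q‖ := le_max_right _ _
  linarith

end SphericalDeriv

theorem clunie_hayman_general (f : ℂ → ℂ) (hf : Differentiable ℂ f) (C : ℝ)
    (hC : ∀ z : ℂ, ‖deriv f z‖ / (1 + ‖f z‖ ^ 2) ≤ C) :
    ∃ C' C'' : ℝ, ∀ z : ℂ, Real.log (1 + ‖f z‖) ≤ C' * ‖z‖ + C'' := by
  obtain ⟨K, hK⟩ := exists_posLog_norm_le_mul_norm_add hf
    (fun z => (hC z).trans (le_max_left C 1)) (one_pos.trans_le (le_max_right C 1))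
  refine ⟨40 * max C 1, log 2 + K, fun z => ?_⟩
  calc log (1 + ‖f z‖) ≤ log⁺ (1 + ‖f z‖) := le_max_right _ _
    _ ≤ log 2 + log⁺ 1 + log⁺ ‖f z‖ := posLog_add
    _ ≤ 40 * max C 1 * ‖z‖ + (log 2 + K) := by
      rw [posLog_one]; linarith [hK z]

/-- Clunie–Hayman theorem: a nonconstant entire function with bounded spherical
derivative `f^#(z) = |f'(z)|/(1+|f(z)|²) ≤ C` has order at most one, normal type:
`log(1 + |f(z)|) ≤ C'·|z| + O(1)` for some constant `C'` depending on `C`. -/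
theorem clunie_hayman (f : ℂ → ℂ) (hf : Differentiable ℂ f)
    (hnc : ¬ ∃ c : ℂ, f = fun _ => c) (C : ℝ)
    (hC : ∀ z : ℂ, ‖deriv f z‖ / (1 + ‖f z‖ ^ 2) ≤ C) :
    ∃ C' C'' : ℝ, ∀ z : ℂ, Real.log (1 + ‖f z‖) ≤ C' * ‖z‖ + C'' :=
  clunie_hayman_general f hf C hC
end
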